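/- Let r∈(1,1/(1−γ)), a∈L^∞(0,T;ℝ^{n×n}) with ‖a‖_{L^∞}≤c₂, M∈L^∞(0,T;ℝ^{n×n}) with ‖M(t)‖≤L a.e., and v∈ℝⁿ with ‖v‖≤c₁. Then the unique solution p∈L^r(0,T;ℝⁿ) of the backward integral equation p(t)=((T−t)^{γ−1}/Γ(γ)) v + ∫_t^T ((s−t)^{γ−1}/Γ(γ)) a(s)ᵀ M(s) p(s) ds satisfies ‖p(t)‖ ≤ C·c₁·(T−t)^{γ−1} for a.e. t∈(0,T), where C>0 depends only on c₂, L, γ and T. -/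

import Mathlib

open MeasureTheory Set Filter Topology

noncomputable section

abbrev Vec (n : ℕ) := EuclideanSpace ℝ (Fin n)

/-- `ℝ^{n×n}` with the Frobenius (Euclidean) norm. -/
abbrev Mat (n : ℕ) := EuclideanSpace ℝ ((Fin n) × (Fin n))

def mv {n : ℕ} (A : Mat n) (x : Vec n) : Vec n :=
  (WithLp.equiv 2 (Fin n → ℝ)).symm (fun i => ∑ j, A (i, j) * x j)

/-- Transposed matrix-vector multiplication `Aᵀ * x`. -/
def mvT {n : ℕ} (A : Mat n) (x : Vec n) : Vec n :=
  (WithLp.equiv 2 (Fin n → ℝ)).symm (fun i => ∑ j, A (j, i) * x j)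

/-!
With `φ = ‖p‖`, the integral equation gives the singular Gronwall inequality
`φ t ≤ c (T - t) ^ (γ - 1) + K ∫ₜᵀ (s - t) ^ (γ - 1) φ s ds`, with `c = c₁ / Γ(γ)` and
`K = c₂ L / Γ(γ)`. Inserting the inequality into itself raises the kernel exponent by `γ` at the
cost of a Beta-integral constant, so after `⌈1/γ⌉` steps the kernel is bounded. Iterating the
bounded-kernel inequality `m` more times leaves a remainder `B ^ (m + 1) T ^ m / m! · ‖φ‖₁`, which
tends to zero because `p ∈ Lʳ ⊆ L¹`, while the accumulated source terms stay below
`c (1 + B T e^{B T} / γ) (T - t) ^ (γ - 1)`.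
-/

open scoped ENNReal

theorem norm_sum_mul_le {ι κ : Type*} [Fintype ι] [Fintype κ] (A : ι → κ → ℝ)
    (x : EuclideanSpace ℝ κ) :
    ‖(WithLp.equiv 2 (ι → ℝ)).symm (fun i => ∑ j, A i j * x j)‖ ≤ √(∑ i, ∑ j, A i j ^ 2) * ‖x‖ := by
  rw [EuclideanSpace.norm_eq, EuclideanSpace.norm_eq x, ← Real.sqrt_mul (by positivity)]
  refine Real.sqrt_le_sqrt ?_
  simp only [Real.norm_eq_abs, sq_abs, WithLp.equiv_symm_apply]
  rw [Finset.sum_mul]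
  exact Finset.sum_le_sum fun i _ => Finset.sum_mul_sq_le_sq_mul_sq _ _ _

theorem norm_mv_le {n : ℕ} (A : Mat n) (x : Vec n) : ‖mv A x‖ ≤ ‖A‖ * ‖x‖ := by
  rw [EuclideanSpace.norm_eq A, Fintype.sum_prod_type]
  simp only [Real.norm_eq_abs, sq_abs]
  exact norm_sum_mul_le (fun i j => A (i, j)) x

theorem norm_mvT_le {n : ℕ} (A : Mat n) (x : Vec n) : ‖mvT A x‖ ≤ ‖A‖ * ‖x‖ := by
  rw [EuclideanSpace.norm_eq A, Fintype.sum_prod_type, Finset.sum_comm]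
  simp only [Real.norm_eq_abs, sq_abs]
  exact norm_sum_mul_le (fun i j => A (j, i)) x

theorem enorm_div_smul_mvT_mv_le {n : ℕ} {k g c₂ L : ℝ} (hk : 0 ≤ k) (hg : 0 < g) {A B : Mat n}
    (hA : ‖A‖ ≤ c₂) (hB : ‖B‖ ≤ L) (x : Vec n) :
    ‖(k / g) • mvT A (mv B x)‖ₑ ≤ ENNReal.ofReal (c₂ * L / g) * (ENNReal.ofReal k * ‖x‖ₑ) := by
  have hc₂ : 0 ≤ c₂ := (norm_nonneg _).trans hA
  have hL : 0 ≤ L := (norm_nonneg _).trans hB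
  have hmat : ‖mvT A (mv B x)‖ ≤ c₂ * (L * ‖x‖) :=
    (norm_mvT_le _ _).trans (mul_le_mul hA ((norm_mv_le _ _).trans (by gcongr)) (norm_nonneg _) hc₂)
  rw [← ofReal_norm, ← ofReal_norm, ← ENNReal.ofReal_mul hk, ← ENNReal.ofReal_mul (by positivity),
    norm_smul, Real.norm_of_nonneg (by positivity)]
  refine ENNReal.ofReal_le_ofReal ?_
  calc k / g * ‖mvT A (mv B x)‖ ≤ k / g * (c₂ * (L * ‖x‖)) := by gcongr
    _ = c₂ * L / g * (k * ‖x‖) := by ring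

theorem lintegral_Ioo_rpow_sub_left {a t u : ℝ} (ha : -1 < a) (htu : t ≤ u) :
    ∫⁻ s in Ioo t u, ENNReal.ofReal ((s - t) ^ a) =
      ENNReal.ofReal ((u - t) ^ (a + 1) / (a + 1)) := by
  have hint : IntervalIntegrable (fun s => (s - t) ^ a) volume t u := by
    simpa using
      (intervalIntegral.intervalIntegrable_rpow' (a := t - t) (b := u - t) ha).comp_sub_right t
  rw [← ofReal_integral_eq_lintegral_ofReal
      ((intervalIntegrable_iff_integrableOn_Ioo_of_le htu).mp hint)
      (ae_restrict_of_forall_mem measurableSet_Ioo fun s hs =>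
        Real.rpow_nonneg (by linarith [hs.1]) _),
    ← integral_Ioc_eq_integral_Ioo, ← intervalIntegral.integral_of_le htu,
    intervalIntegral.integral_comp_sub_right (fun x => x ^ a), integral_rpow (Or.inl ha), sub_self,
    Real.zero_rpow (by linarith), sub_zero]

theorem lintegral_Ioo_rpow_sub_right {b t u : ℝ} (hb : -1 < b) (htu : t ≤ u) :
    ∫⁻ s in Ioo t u, ENNReal.ofReal ((u - s) ^ b) =
      ENNReal.ofReal ((u - t) ^ (b + 1) / (b + 1)) := by
  have hint : IntervalIntegrable (fun s => (u - s) ^ b) volume t u := by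
    simpa using
      ((intervalIntegral.intervalIntegrable_rpow' (a := u - u) (b := u - t) hb).comp_sub_left
        u).symm
  rw [← ofReal_integral_eq_lintegral_ofReal
      ((intervalIntegrable_iff_integrableOn_Ioo_of_le htu).mp hint)
      (ae_restrict_of_forall_mem measurableSet_Ioo fun s hs =>
        Real.rpow_nonneg (by linarith [hs.2]) _),
    ← integral_Ioc_eq_integral_Ioo, ← intervalIntegral.integral_of_le htu,
    intervalIntegral.integral_comp_sub_left (fun x => x ^ b), integral_rpow (Or.inl hb), sub_self,
    Real.zero_rpow (by linarith), sub_zero]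

theorem rpow_le_two_rpow_abs_mul_rpow {x L a : ℝ} (hx : 0 < x) (hxL : x ≤ L) (hLx : L ≤ 2 * x) :
    x ^ a ≤ 2 ^ |a| * L ^ a := by
  rcases le_or_gt 0 a with ha | ha
  · calc x ^ a ≤ L ^ a := Real.rpow_le_rpow hx.le hxL ha
      _ ≤ 2 ^ |a| * L ^ a := le_mul_of_one_le_left (Real.rpow_nonneg (hx.le.trans hxL) a)
        (Real.one_le_rpow one_le_two (abs_nonneg a))
  · calc x ^ a ≤ (L / 2) ^ a := Real.rpow_le_rpow_of_nonpos (by linarith) (by linarith) ha.le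
      _ = 2 ^ |a| * L ^ a := by
        rw [Real.div_rpow (by linarith) zero_le_two, abs_of_neg ha, Real.rpow_neg zero_le_two]
        ring

-- The larger of `x` and `y` lies between `(x + y) / 2` and `x + y`.
theorem rpow_mul_rpow_le {x y a b : ℝ} (hx : 0 < x) (hy : 0 < y) :
    x ^ a * y ^ b ≤ 2 ^ |a| * (x + y) ^ a * y ^ b + 2 ^ |b| * (x + y) ^ b * x ^ a := by
  have hxa := Real.rpow_nonneg hx.le a
  have hyb := Real.rpow_nonneg hy.le b
  rcases le_total y x with hxy | hxy
  · have := mul_le_mul_of_nonneg_right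
      (rpow_le_two_rpow_abs_mul_rpow (a := a) (L := x + y) hx (by linarith) (by linarith)) hyb
    have : 0 ≤ 2 ^ |b| * (x + y) ^ b * x ^ a := by positivity
    linarith
  · have := mul_le_mul_of_nonneg_right
      (rpow_le_two_rpow_abs_mul_rpow (a := b) (L := x + y) hy (by linarith) (by linarith)) hxa
    have : 0 ≤ 2 ^ |a| * (x + y) ^ a * y ^ b := by positivity
    linarith

def BetaBound (a b : ℝ) (β : ℝ≥0∞) : Prop :=
  ∀ ⦃t u : ℝ⦄, t < u → ∫⁻ s in Ioo t u, ENNReal.ofReal ((s - t) ^ a) * ENNReal.ofReal ((u - s) ^ b)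
    ≤ β * ENNReal.ofReal ((u - t) ^ (a + b + 1))

theorem betaBound_of_neg_one_lt {a b : ℝ} (ha : -1 < a) (hb : -1 < b) :
    BetaBound a b (ENNReal.ofReal (2 ^ |a| / (b + 1) + 2 ^ |b| / (a + 1))) := by
  intro t u htu
  have hL : 0 < u - t := by linarith
  have ha1 : 0 < a + 1 := by linarith
  have hb1 : 0 < b + 1 := by linarith
  calc ∫⁻ s in Ioo t u, ENNReal.ofReal ((s - t) ^ a) * ENNReal.ofReal ((u - s) ^ b)
      ≤ ∫⁻ s in Ioo t u, ENNReal.ofReal (2 ^ |a| * (u - t) ^ a) * ENNReal.ofReal ((u - s) ^ b)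
          + ENNReal.ofReal (2 ^ |b| * (u - t) ^ b) * ENNReal.ofReal ((s - t) ^ a) := by
        refine setLIntegral_mono' measurableSet_Ioo fun s hs => ?_
        have hx : 0 < s - t := by linarith [hs.1]
        have hy : 0 < u - s := by linarith [hs.2]
        have key := rpow_mul_rpow_le (a := a) (b := b) hx hy
        rw [show s - t + (u - s) = u - t by ring] at key
        rw [← ENNReal.ofReal_mul (by positivity), ← ENNReal.ofReal_mul (by positivity),
          ← ENNReal.ofReal_mul (by positivity),
          ← ENNReal.ofReal_add (by positivity) (by positivity)]
        exact ENNReal.ofReal_le_ofReal key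
    _ = ENNReal.ofReal (2 ^ |a| * (u - t) ^ a) * ENNReal.ofReal ((u - t) ^ (b + 1) / (b + 1))
          + ENNReal.ofReal (2 ^ |b| * (u - t) ^ b) *
            ENNReal.ofReal ((u - t) ^ (a + 1) / (a + 1)) := by
        rw [lintegral_add_left (by fun_prop), lintegral_const_mul' _ _ ENNReal.ofReal_ne_top,
          lintegral_const_mul' _ _ ENNReal.ofReal_ne_top, lintegral_Ioo_rpow_sub_right hb htu.le,
          lintegral_Ioo_rpow_sub_left ha htu.le]
    _ = ENNReal.ofReal (2 ^ |a| / (b + 1) + 2 ^ |b| / (a + 1)) *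
          ENNReal.ofReal ((u - t) ^ (a + b + 1)) := by
        rw [← ENNReal.ofReal_mul (by positivity), ← ENNReal.ofReal_mul (by positivity),
          ← ENNReal.ofReal_add (by positivity) (by positivity),
          ← ENNReal.ofReal_mul (by positivity)]
        congr 1
        rw [Real.rpow_add_one hL.ne', Real.rpow_add_one hL.ne', Real.rpow_add_one hL.ne',
          Real.rpow_add hL]
        ring

theorem betaBound_of_nonneg_left {a b : ℝ} (ha : 0 ≤ a) (hb : -1 < b) :
    BetaBound a b (ENNReal.ofReal (1 / (b + 1))) := by
  intro t u htu
  calc ∫⁻ s in Ioo t u, ENNReal.ofReal ((s - t) ^ a) * ENNReal.ofReal ((u - s) ^ b)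
      ≤ ∫⁻ s in Ioo t u, ENNReal.ofReal ((u - t) ^ a) * ENNReal.ofReal ((u - s) ^ b) :=
        setLIntegral_mono' measurableSet_Ioo fun s hs => by
          gcongr
          exacts [by linarith [hs.1], by linarith [hs.2]]
    _ = ENNReal.ofReal (1 / (b + 1)) * ENNReal.ofReal ((u - t) ^ (a + b + 1)) := by
        have hL : 0 < u - t := by linarith
        rw [lintegral_const_mul' _ _ ENNReal.ofReal_ne_top, lintegral_Ioo_rpow_sub_right hb htu.le,
          ← ENNReal.ofReal_mul (by positivity),
          ← ENNReal.ofReal_mul (one_div_pos.mpr (by linarith)).le, Real.rpow_add_one hL.ne',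
          Real.rpow_add_one hL.ne', Real.rpow_add hL]
        congr 1
        ring

theorem betaBound_zero_right {a : ℝ} (ha : -1 < a) :
    BetaBound a 0 (ENNReal.ofReal (1 / (a + 1))) := by
  intro t u htu
  simp only [Real.rpow_zero, ENNReal.ofReal_one, mul_one, add_zero]
  rw [lintegral_Ioo_rpow_sub_left ha htu.le,
    ← ENNReal.ofReal_mul (one_div_pos.mpr (by linarith)).le]
  exact le_of_eq (by ring_nf)

theorem lintegral_Ioo_mul_lintegral_Ioo_swap {F : ℝ → ℝ≥0∞} {G : ℝ → ℝ → ℝ≥0∞}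
    (hF : Measurable F) (hG : Measurable (Function.uncurry G)) (t T : ℝ) :
    ∫⁻ s in Ioo t T, F s * ∫⁻ u in Ioo s T, G s u =
      ∫⁻ u in Ioo t T, ∫⁻ s in Ioo t u, F s * G s u := by
  set H : ℝ → ℝ → ℝ≥0∞ := fun s u => if s < u then F s * G s u else 0
  have hH : Measurable (Function.uncurry H) :=
    Measurable.ite (measurableSet_lt measurable_fst measurable_snd)
      ((hF.comp measurable_fst).mul hG) measurable_const
  have h_inner_u : ∀ s ∈ Ioo t T, ∫⁻ u in Ioo t T, H s u = F s * ∫⁻ u in Ioo s T, G s u := by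
    intro s hs
    have : Ioi s ∩ Ioo t T = Ioo s T := by
      ext u; simp only [mem_inter_iff, mem_Ioi, mem_Ioo]; constructor
      · rintro ⟨h1, -, h2⟩; exact ⟨h1, h2⟩
      · rintro ⟨h1, h2⟩; exact ⟨h1, hs.1.trans h1, h2⟩
    rw [← this, ← Measure.restrict_restrict measurableSet_Ioi,
      ← lintegral_indicator measurableSet_Ioi, ← lintegral_const_mul (F s)
        ((show Measurable (G s) from hG.comp measurable_prodMk_left).indicator measurableSet_Ioi)]
    refine lintegral_congr fun u => ?_
    by_cases hsu : s < u <;> simp [H, hsu]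
  have h_inner_s : ∀ u ∈ Ioo t T, ∫⁻ s in Ioo t T, H s u = ∫⁻ s in Ioo t u, F s * G s u := by
    intro u hu
    have : Iio u ∩ Ioo t T = Ioo t u := by rw [Iio_inter_Ioo, min_eq_left hu.2.le]
    rw [← this, ← Measure.restrict_restrict measurableSet_Iio,
      ← lintegral_indicator measurableSet_Iio]
    refine lintegral_congr fun s => ?_
    by_cases hsu : s < u <;> simp [H, hsu]
  calc ∫⁻ s in Ioo t T, F s * ∫⁻ u in Ioo s T, G s u
      = ∫⁻ s in Ioo t T, ∫⁻ u in Ioo t T, H s u :=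
        (setLIntegral_congr_fun measurableSet_Ioo h_inner_u).symm
    _ = ∫⁻ u in Ioo t T, ∫⁻ s in Ioo t T, H s u := lintegral_lintegral_swap hH.aemeasurable
    _ = ∫⁻ u in Ioo t T, ∫⁻ s in Ioo t u, F s * G s u :=
        setLIntegral_congr_fun measurableSet_Ioo h_inner_s

theorem BetaBound.lintegral_Ioo_comp_le {e α : ℝ} {β : ℝ≥0∞} (h : BetaBound e α β)
    {φ : ℝ → ℝ≥0∞} (hφ : Measurable φ) (t T : ℝ) :
    ∫⁻ s in Ioo t T, ENNReal.ofReal ((s - t) ^ e) *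
        ∫⁻ u in Ioo s T, ENNReal.ofReal ((u - s) ^ α) * φ u
      ≤ β * ∫⁻ u in Ioo t T, ENNReal.ofReal ((u - t) ^ (e + α + 1)) * φ u := by
  rw [lintegral_Ioo_mul_lintegral_Ioo_swap (by fun_prop) (by fun_prop),
    ← lintegral_const_mul _ (by fun_prop)]
  refine setLIntegral_mono' measurableSet_Ioo fun u hu => ?_
  calc ∫⁻ s in Ioo t u, ENNReal.ofReal ((s - t) ^ e) * (ENNReal.ofReal ((u - s) ^ α) * φ u)
      = (∫⁻ s in Ioo t u, ENNReal.ofReal ((s - t) ^ e) * ENNReal.ofReal ((u - s) ^ α)) * φ u := by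
        simp_rw [← mul_assoc]
        exact lintegral_mul_const _ (by fun_prop)
    _ ≤ β * ENNReal.ofReal ((u - t) ^ (e + α + 1)) * φ u := by gcongr; exact h hu.1
    _ = β * (ENNReal.ofReal ((u - t) ^ (e + α + 1)) * φ u) := mul_assoc _ _ _

theorem rpow_add_le_mul_rpow {x T a b : ℝ} (hx : 0 < x) (hxT : x ≤ T) (ha : 0 ≤ a) :
    x ^ (a + b) ≤ T ^ a * x ^ b := by
  rw [Real.rpow_add hx]
  gcongr

theorem setLIntegral_Ioo_rpow_sub_mul_le {t T e : ℝ} (ht : 0 ≤ t) (he : 0 ≤ e) (φ : ℝ → ℝ≥0∞) :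
    ∫⁻ s in Ioo t T, ENNReal.ofReal ((s - t) ^ e) * φ s ≤
      ENNReal.ofReal (T ^ e) * ∫⁻ s in Ioo t T, φ s := by
  rw [← lintegral_const_mul' _ _ ENNReal.ofReal_ne_top]
  refine setLIntegral_mono' measurableSet_Ioo fun s hs => ?_
  gcongr
  exacts [by linarith [hs.1], by linarith [hs.2]]

def VolterraIneq (γ T : ℝ) (c K : ℝ≥0∞) (e : ℝ) (φ : ℝ → ℝ≥0∞) : Prop :=
  ∀ᵐ t ∂volume.restrict (Ioo 0 T), φ t ≤ c * ENNReal.ofReal ((T - t) ^ (γ - 1)) +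
    K * ∫⁻ s in Ioo t T, ENNReal.ofReal ((s - t) ^ e) * φ s

namespace VolterraIneq

variable {γ T : ℝ} {φ : ℝ → ℝ≥0∞}

/-- Inserts `hbase` into the integral of `hclaim`. -/
theorem subst {c K d D b₁ b₂ : ℝ≥0∞} {α e : ℝ} (hφ : Measurable φ) (hK : K ≠ ⊤)
    (hbase : VolterraIneq γ T c K α φ) (hclaim : VolterraIneq γ T d D e φ)
    (he : 0 ≤ e + 1) (h₁ : BetaBound e (γ - 1) b₁) (h₂ : BetaBound e α b₂) :
    VolterraIneq γ T (d + D * c * b₁ * ENNReal.ofReal (T ^ (e + 1))) (D * K * b₂) (e + α + 1)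
      φ := by
  filter_upwards [hclaim, ae_restrict_mem measurableSet_Ioo] with t hclaim ⟨ht0, htT⟩
  have hbase' : ∀ᵐ s ∂volume.restrict (Ioo t T), φ s ≤ c * ENNReal.ofReal ((T - s) ^ (γ - 1)) +
      K * ∫⁻ u in Ioo s T, ENNReal.ofReal ((u - s) ^ α) * φ u :=
    ae_restrict_of_ae_restrict_of_subset (Ioo_subset_Ioo_left ht0.le) hbase
  have hsource : ∫⁻ s in Ioo t T, ENNReal.ofReal ((s - t) ^ e) * ENNReal.ofReal ((T - s) ^ (γ - 1))
      ≤ b₁ * ENNReal.ofReal (T ^ (e + 1)) * ENNReal.ofReal ((T - t) ^ (γ - 1)) := by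
    refine (h₁ htT).trans ?_
    rw [mul_assoc, ← ENNReal.ofReal_mul (Real.rpow_nonneg (by linarith) _),
      show e + (γ - 1) + 1 = e + 1 + (γ - 1) by ring]
    gcongr
    exact rpow_add_le_mul_rpow (by linarith) (by linarith) he
  calc φ t ≤ d * ENNReal.ofReal ((T - t) ^ (γ - 1)) +
        D * ∫⁻ s in Ioo t T, ENNReal.ofReal ((s - t) ^ e) * φ s := hclaim
    _ ≤ d * ENNReal.ofReal ((T - t) ^ (γ - 1)) +
        D * ∫⁻ s in Ioo t T, ENNReal.ofReal ((s - t) ^ e) *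
          (c * ENNReal.ofReal ((T - s) ^ (γ - 1)) +
            K * ∫⁻ u in Ioo s T, ENNReal.ofReal ((u - s) ^ α) * φ u) := by
        gcongr 2
        exact lintegral_mono_ae (hbase'.mono fun s hs => by gcongr)
    _ = d * ENNReal.ofReal ((T - t) ^ (γ - 1)) +
        D * ((c * ∫⁻ s in Ioo t T,
            ENNReal.ofReal ((s - t) ^ e) * ENNReal.ofReal ((T - s) ^ (γ - 1))) +
          K * ∫⁻ s in Ioo t T, ENNReal.ofReal ((s - t) ^ e) *
            ∫⁻ u in Ioo s T, ENNReal.ofReal ((u - s) ^ α) * φ u) := by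
        simp_rw [mul_add, mul_left_comm (ENNReal.ofReal _) c, mul_left_comm (ENNReal.ofReal _) K]
        rw [lintegral_add_left (by fun_prop), lintegral_const_mul _ (by fun_prop),
          lintegral_const_mul' _ _ hK, mul_add D]
    _ ≤ d * ENNReal.ofReal ((T - t) ^ (γ - 1)) +
        D * ((c * (b₁ * ENNReal.ofReal (T ^ (e + 1)) * ENNReal.ofReal ((T - t) ^ (γ - 1)))) +
          K * (b₂ * ∫⁻ u in Ioo t T, ENNReal.ofReal ((u - t) ^ (e + α + 1)) * φ u)) := by
        gcongr
        exact h₂.lintegral_Ioo_comp_le hφ t T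
    _ = _ := by ring

theorem const_kernel {c K : ℝ≥0∞} {e : ℝ} (he : 0 ≤ e) (h : VolterraIneq γ T c K e φ) :
    VolterraIneq γ T c (K * ENNReal.ofReal (T ^ e)) 0 φ := by
  filter_upwards [h, ae_restrict_mem measurableSet_Ioo] with t ht htT
  refine ht.trans ?_
  simp only [Real.rpow_zero, ENNReal.ofReal_one, one_mul, mul_assoc]
  gcongr
  exact setLIntegral_Ioo_rpow_sub_mul_le htT.1.le he φ

theorem exists_iterate (hγ : 0 < γ) {K : ℝ≥0∞} (hK : K ≠ ⊤) (k : ℕ) :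
    ∃ A B : ℝ≥0∞, A ≠ ⊤ ∧ B ≠ ⊤ ∧ ∀ c φ, Measurable φ → VolterraIneq γ T c K (γ - 1) φ →
      VolterraIneq γ T (A * c) B ((k + 1) * γ - 1) φ := by
  induction k with
  | zero => exact ⟨1, K, ENNReal.one_ne_top, hK, fun c φ _ h => by simpa using h⟩
  | succ k ih =>
    obtain ⟨A, B, hA, hB, hAB⟩ := ih
    set e : ℝ := (k + 1) * γ - 1
    set β := ENNReal.ofReal (2 ^ |e| / (γ - 1 + 1) + 2 ^ |γ - 1| / (e + 1))
    have he : 0 < e + 1 := by simp only [e, sub_add_cancel]; positivity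
    refine ⟨A + B * β * ENNReal.ofReal (T ^ (e + 1)), B * K * β, by finiteness, by finiteness,
      fun c φ hφ h => ?_⟩
    have := subst hφ hK h (hAB c φ hφ h) he.le (betaBound_of_neg_one_lt (by linarith) (by linarith))
      (betaBound_of_neg_one_lt (by linarith) (by linarith))
    convert this using 2 <;> push_cast <;> ring

theorem exists_const_kernel (hγ : 0 < γ) {K : ℝ≥0∞} (hK : K ≠ ⊤) :
    ∃ A B : ℝ≥0∞, A ≠ ⊤ ∧ B ≠ ⊤ ∧ ∀ c φ, Measurable φ → VolterraIneq γ T c K (γ - 1) φ →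
      VolterraIneq γ T (A * c) B 0 φ := by
  obtain ⟨A, B, hA, hB, hAB⟩ := exists_iterate (T := T) hγ hK ⌈1 / γ⌉₊
  have he : 0 ≤ (⌈1 / γ⌉₊ + 1) * γ - 1 := by
    have := mul_le_mul_of_nonneg_right (Nat.le_ceil (1 / γ)) hγ.le
    rw [one_div_mul_cancel hγ.ne'] at this
    nlinarith
  exact ⟨A, B * ENNReal.ofReal (T ^ _), hA, by finiteness,
    fun c φ hφ h => (hAB c φ hφ h).const_kernel he⟩

theorem iterate_const_kernel (hγ : 0 < γ) (hT : 0 ≤ T) {c : ℝ≥0∞} {B : ℝ} (hB : 0 ≤ B)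
    (hφ : Measurable φ) (h : VolterraIneq γ T c (ENNReal.ofReal B) 0 φ) (m : ℕ) :
    VolterraIneq γ T
      (c * ENNReal.ofReal (1 + B * T / γ * ∑ j ∈ Finset.range m, (B * T) ^ j / j.factorial))
      (ENNReal.ofReal (B ^ (m + 1) / m.factorial)) m φ := by
  induction m with
  | zero => simpa using h
  | succ m ih =>
    have hm : (0 : ℝ) ≤ m := Nat.cast_nonneg m
    have := subst hφ ENNReal.ofReal_ne_top h ih (by linarith)
      (betaBound_of_nonneg_left hm (by linarith)) (betaBound_zero_right (by linarith))
    convert this using 2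
    · have hS :
          ENNReal.ofReal (1 + B * T / γ * ∑ j ∈ Finset.range (m + 1), (B * T) ^ j / j.factorial) =
          ENNReal.ofReal (1 + B * T / γ * ∑ j ∈ Finset.range m, (B * T) ^ j / j.factorial) +
            ENNReal.ofReal (B ^ (m + 1) / m.factorial) * ENNReal.ofReal (1 / (γ - 1 + 1)) *
              ENNReal.ofReal (T ^ ((m : ℝ) + 1)) := by
        have := hγ.ne'
        rw [sub_add_cancel, ← ENNReal.ofReal_mul (by positivity),
          ← ENNReal.ofReal_mul (by positivity),
          ← ENNReal.ofReal_add (by positivity) (by positivity)]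
        congr 1
        rw [Finset.sum_range_succ, show (m : ℝ) + 1 = ((m + 1 : ℕ) : ℝ) by push_cast; ring,
          Real.rpow_natCast]
        field_simp
        ring
      rw [hS]
      ring
    · rw [← ENNReal.ofReal_mul (by positivity), ← ENNReal.ofReal_mul (by positivity)]
      congr 1
      rw [Nat.factorial_succ]
      push_cast
      field_simp
      ring
    · push_cast; ring

theorem exists_gronwall_bound (hγ : 0 < γ) (hT : 0 ≤ T) {K : ℝ≥0∞} (hK : K ≠ ⊤) :
    ∃ C : ℝ≥0∞, C ≠ ⊤ ∧ ∀ c φ, Measurable φ → ∫⁻ s in Ioo 0 T, φ s ≠ ⊤ →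
      VolterraIneq γ T c K (γ - 1) φ →
        ∀ᵐ t ∂volume.restrict (Ioo 0 T), φ t ≤ C * c * ENNReal.ofReal ((T - t) ^ (γ - 1)) := by
  obtain ⟨A, B, hA, hB, hAB⟩ := exists_const_kernel (T := T) hγ hK
  set b := B.toReal
  set S := 1 + b * T / γ * Real.exp (b * T)
  refine ⟨A * ENNReal.ofReal S, by finiteness, fun c φ hφ hI h => ?_⟩
  have h0 : VolterraIneq γ T (A * c) (ENNReal.ofReal b) 0 φ := by
    rw [ENNReal.ofReal_toReal hB]
    exact hAB c φ hφ h
  have hm := fun m => iterate_const_kernel hγ hT ENNReal.toReal_nonneg hφ h0 m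
  filter_upwards [ae_all_iff.2 hm, ae_restrict_mem measurableSet_Ioo] with t ht ht'
  have hbound : ∀ m : ℕ, φ t ≤ A * c * ENNReal.ofReal S * ENNReal.ofReal ((T - t) ^ (γ - 1)) +
      ENNReal.ofReal (b * (b * T) ^ m / m.factorial) * ∫⁻ s in Ioo 0 T, φ s := by
    intro m
    refine (ht m).trans (add_le_add ?_ ?_)
    · gcongr
      show _ ≤ 1 + b * T / γ * Real.exp (b * T)
      gcongr
      exact Real.sum_le_exp_of_nonneg (by positivity) m
    · calc ENNReal.ofReal (b ^ (m + 1) / m.factorial) *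
            ∫⁻ s in Ioo t T, ENNReal.ofReal ((s - t) ^ (m : ℝ)) * φ s
          ≤ ENNReal.ofReal (b ^ (m + 1) / m.factorial) *
            (ENNReal.ofReal (T ^ (m : ℝ)) * ∫⁻ s in Ioo 0 T, φ s) := by
            gcongr _ * ?_
            refine (setLIntegral_Ioo_rpow_sub_mul_le ht'.1.le (Nat.cast_nonneg m) φ).trans ?_
            gcongr
            exact ht'.1.le
        _ = ENNReal.ofReal (b * (b * T) ^ m / m.factorial) * ∫⁻ s in Ioo 0 T, φ s := by
            rw [← mul_assoc, ← ENNReal.ofReal_mul (by positivity), Real.rpow_natCast]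
            congr 2
            ring
  have hlim : Tendsto (fun m : ℕ => A * c * ENNReal.ofReal S * ENNReal.ofReal ((T - t) ^ (γ - 1)) +
      ENNReal.ofReal (b * (b * T) ^ m / m.factorial) * ∫⁻ s in Ioo 0 T, φ s) atTop
        (𝓝 (A * c * ENNReal.ofReal S * ENNReal.ofReal ((T - t) ^ (γ - 1)))) := by
    have : Tendsto (fun m : ℕ => b * (b * T) ^ m / m.factorial) atTop (𝓝 0) := by
      simpa [mul_div_assoc] using
        (FloorSemiring.tendsto_pow_div_factorial_atTop (b * T)).const_mul b
    simpa using tendsto_const_nhds.add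
      (ENNReal.Tendsto.mul_const (ENNReal.tendsto_ofReal this) (Or.inr hI))
  calc φ t ≤ A * c * ENNReal.ofReal S * ENNReal.ofReal ((T - t) ^ (γ - 1)) :=
        ge_of_tendsto' hlim hbound
    _ = A * ENNReal.ofReal S * c * ENNReal.ofReal ((T - t) ^ (γ - 1)) := by ring

end VolterraIneq

theorem MeasureTheory.MemLp.exists_stronglyMeasurable_lintegral_ne_top {α E : Type*}
    [MeasurableSpace α] [NormedAddCommGroup E] {μ : Measure α} {f : α → E} (hf : MemLp f 1 μ) :
    ∃ g, StronglyMeasurable g ∧ f =ᵐ[μ] g ∧ ∫⁻ x, ‖g x‖ₑ ∂μ ≠ ⊤ := by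
  obtain ⟨g, hg, hfg⟩ := hf.1
  exact ⟨g, hg, hfg, ((memLp_one_iff_integrable.1 hf).congr hfg).2.ne⟩

theorem volterraIneq_of_integral_eq {n : ℕ} {γ T c₁ c₂ L : ℝ} (hγ : 0 < γ) {a M : ℝ → Mat n}
    (ha : ∀ t ∈ Icc 0 T, ‖a t‖ ≤ c₂) (hM : ∀ t ∈ Icc 0 T, ‖M t‖ ≤ L) {v : Vec n} (hv : ‖v‖ ≤ c₁)
    {p q : ℝ → Vec n} (hpq : p =ᵐ[volume.restrict (Ioo 0 T)] q)
    (heq : ∀ᵐ t ∂volume.restrict (Ioo 0 T), p t = ((T - t) ^ (γ - 1) / Real.Gamma γ) • v +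
      ∫ s in t..T, ((s - t) ^ (γ - 1) / Real.Gamma γ) • mvT (a s) (mv (M s) (p s))) :
    VolterraIneq γ T (ENNReal.ofReal (c₁ / Real.Gamma γ)) (ENNReal.ofReal (c₂ * L / Real.Gamma γ))
      (γ - 1) (fun s => ‖q s‖ₑ) := by
  have hΓ := Real.Gamma_pos_of_pos hγ
  filter_upwards [heq, hpq, ae_restrict_mem measurableSet_Ioo] with t ht hpqt htI
  obtain ⟨ht0, htT⟩ := htI
  have hsource : ‖((T - t) ^ (γ - 1) / Real.Gamma γ) • v‖ₑ
      ≤ ENNReal.ofReal (c₁ / Real.Gamma γ) * ENNReal.ofReal ((T - t) ^ (γ - 1)) := by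
    have hc₁ : 0 ≤ c₁ := (norm_nonneg v).trans hv
    rw [← ofReal_norm, ← ENNReal.ofReal_mul (by positivity), norm_smul,
      Real.norm_of_nonneg (by have := Real.rpow_nonneg (sub_nonneg.2 htT.le) (γ - 1); positivity)]
    refine ENNReal.ofReal_le_ofReal ?_
    calc (T - t) ^ (γ - 1) / Real.Gamma γ * ‖v‖ ≤ (T - t) ^ (γ - 1) / Real.Gamma γ * c₁ := by
          gcongr
      _ = c₁ / Real.Gamma γ * (T - t) ^ (γ - 1) := by ring
  have hkernel : ‖∫ s in t..T, ((s - t) ^ (γ - 1) / Real.Gamma γ) • mvT (a s) (mv (M s) (p s))‖ₑ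
      ≤ ENNReal.ofReal (c₂ * L / Real.Gamma γ) *
        ∫⁻ s in Ioo t T, ENNReal.ofReal ((s - t) ^ (γ - 1)) * ‖q s‖ₑ := by
    have hpq' : p =ᵐ[volume.restrict (Ioo t T)] q :=
      ae_restrict_of_ae_restrict_of_subset (Ioo_subset_Ioo_left ht0.le) hpq
    rw [intervalIntegral.integral_of_le htT.le]
    calc _ ≤ ∫⁻ s in Ioc t T, ‖((s - t) ^ (γ - 1) / Real.Gamma γ) • mvT (a s) (mv (M s) (p s))‖ₑ :=
          enorm_integral_le_lintegral_enorm _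
      _ ≤ ∫⁻ s in Ioc t T, ENNReal.ofReal (c₂ * L / Real.Gamma γ) *
            (ENNReal.ofReal ((s - t) ^ (γ - 1)) * ‖p s‖ₑ) :=
          setLIntegral_mono' measurableSet_Ioc fun s hs =>
            have hsI : s ∈ Icc 0 T := ⟨by linarith [hs.1], hs.2⟩
            enorm_div_smul_mvT_mv_le (Real.rpow_nonneg (by linarith [hs.1]) _) hΓ (ha s hsI)
              (hM s hsI) _
      _ = _ := by
          rw [lintegral_const_mul' _ _ ENNReal.ofReal_ne_top, ← setLIntegral_congr Ioo_ae_eq_Ioc]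
          exact congrArg _ (lintegral_congr_ae (hpq'.mono fun s hs => by simp only [hs]))
  calc ‖q t‖ₑ = ‖p t‖ₑ := by rw [hpqt]
    _ ≤ _ := ht ▸ enorm_add_le _ _
    _ ≤ _ := add_le_add hsource hkernel

theorem stmt_17_general {n : ℕ} (γ T c₂ L : ℝ) (hγ : γ ∈ Ioo (0:ℝ) 1) (hT : 0 < T) :
    ∃ C : ℝ, 0 < C ∧
      ∀ r : ℝ, r ∈ Ioo 1 (1 / (1 - γ)) →
      ∀ a M : ℝ → Mat n, Measurable a → Measurable M →
        (∀ t ∈ Icc (0:ℝ) T, ‖a t‖ ≤ c₂) →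
        (∀ t ∈ Icc (0:ℝ) T, ‖M t‖ ≤ L) →
      ∀ v : Vec n, ∀ c₁ : ℝ, ‖v‖ ≤ c₁ →
      ∀ p : ℝ → Vec n,
        MemLp p (ENNReal.ofReal r) (volume.restrict (Ioc 0 T)) →
        (∀ᵐ t ∂(volume.restrict (Ioo (0:ℝ) T)),
          p t = ((T - t) ^ (γ - 1) / Real.Gamma γ) • v +
            ∫ s in t..T, ((s - t) ^ (γ - 1) / Real.Gamma γ) • mvT (a s) (mv (M s) (p s))) →
        ∀ᵐ t ∂(volume.restrict (Ioo (0:ℝ) T)),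
          ‖p t‖ ≤ C * c₁ * (T - t) ^ (γ - 1) := by
  have hΓ := Real.Gamma_pos_of_pos hγ.1
  obtain ⟨C, hC, hgronwall⟩ := VolterraIneq.exists_gronwall_bound (T := T) hγ.1 hT.le
    (K := ENNReal.ofReal (c₂ * L / Real.Gamma γ)) ENNReal.ofReal_ne_top
  refine ⟨(C.toReal + 1) / Real.Gamma γ, by positivity,
    fun r hr a M _ _ ha hM v c₁ hv p hp heq => ?_⟩
  obtain ⟨q, hq, hpq, hI⟩ :=
    (hp.mono_exponent (ENNReal.one_le_ofReal.2 hr.1.le)).exists_stronglyMeasurable_lintegral_ne_top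
  replace hpq := ae_restrict_of_ae_restrict_of_subset Ioo_subset_Ioc_self hpq
  replace hI := ne_top_of_le_ne_top hI (lintegral_mono_set Ioo_subset_Ioc_self)
  have hc₁ : 0 ≤ c₁ := (norm_nonneg v).trans hv
  filter_upwards [hgronwall _ _ hq.measurable.enorm hI
    (volterraIneq_of_integral_eq hγ.1 ha hM hv hpq heq), hpq, ae_restrict_mem measurableSet_Ioo]
    with t ht hpqt htI
  have hw : 0 ≤ (T - t) ^ (γ - 1) := Real.rpow_nonneg (sub_nonneg.2 htI.2.le) _
  have hqt : ‖q t‖ ≤ C.toReal * (c₁ / Real.Gamma γ) * (T - t) ^ (γ - 1) := by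
    rw [← ENNReal.ofReal_le_ofReal_iff (by positivity), ofReal_norm,
      ENNReal.ofReal_mul (by positivity), ENNReal.ofReal_mul ENNReal.toReal_nonneg,
      ENNReal.ofReal_toReal hC]
    exact ht
  calc ‖p t‖ = ‖q t‖ := by rw [hpqt]
    _ ≤ C.toReal * (c₁ / Real.Gamma γ) * (T - t) ^ (γ - 1) := hqt
    _ ≤ (C.toReal + 1) / Real.Gamma γ * c₁ * (T - t) ^ (γ - 1) := by
        refine mul_le_mul_of_nonneg_right ?_ hw
        rw [mul_div_assoc', div_mul_eq_mul_div]
        gcongr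
        linarith

/-- Let `r ∈ (1, 1/(1-γ))`, `a ∈ L^∞(0,T;ℝ^{n×n})` with `‖a‖_{L^∞} ≤ c₂`,
`M ∈ L^∞(0,T;ℝ^{n×n})` with `‖M(t)‖ ≤ L` a.e., and `v ∈ ℝⁿ` with `‖v‖ ≤ c₁`. Then the
solution `p ∈ L^r(0,T;ℝⁿ)` of the backward integral equation satisfies
`‖p(t)‖ ≤ C c₁ (T-t)^(γ-1)` for a.e. `t ∈ (0,T)`, where `C > 0` depends only on
`c₂, L, γ, T`. -/
theorem stmt_17 {n : ℕ} (γ T c₂ L : ℝ) (hγ : γ ∈ Ioo (0:ℝ) 1) (hT : 0 < T)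
    (hc₂ : 0 ≤ c₂) (hL : 0 < L) :
    ∃ C : ℝ, 0 < C ∧
      ∀ r : ℝ, r ∈ Ioo 1 (1 / (1 - γ)) →
      ∀ a M : ℝ → Mat n, Measurable a → Measurable M →
        (∀ t ∈ Icc (0:ℝ) T, ‖a t‖ ≤ c₂) →
        (∀ t ∈ Icc (0:ℝ) T, ‖M t‖ ≤ L) →
      ∀ v : Vec n, ∀ c₁ : ℝ, ‖v‖ ≤ c₁ →
      ∀ p : ℝ → Vec n,
        MemLp p (ENNReal.ofReal r) (volume.restrict (Ioc 0 T)) →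
        (∀ᵐ t ∂(volume.restrict (Ioo (0:ℝ) T)),
          p t = ((T - t) ^ (γ - 1) / Real.Gamma γ) • v +
            ∫ s in t..T, ((s - t) ^ (γ - 1) / Real.Gamma γ) • mvT (a s) (mv (M s) (p s))) →
        ∀ᵐ t ∂(volume.restrict (Ioo (0:ℝ) T)),
          ‖p t‖ ≤ C * c₁ * (T - t) ^ (γ - 1) :=
  stmt_17_general γ T c₂ L hγ hT
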